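/- With W(x) = 2((1 + x₄)² + x₁² + x₂² + x₃²)^{−1} on the closed upper half-space of ℝ⁴, one has lim_{R→∞} (log R)^{−1} ∫_{B⁴₊(0,R)} x₄² |∇W(x)|² dx = 4π², where ∇ is the full Euclidean gradient in ℝ⁴. In particular, the weighted energy ∫ x₄²|∇W|² over the half-ball of radius R diverges logarithmically as R → ∞. -/

import Mathlib

open MeasureTheory Real Set Filter Topology

noncomputable section

/-- The standard bubble `W_{1,0}` for `n = 3`, `γ = 1/2`:
`W(x) = 2((1 + x₄)² + x₁² + x₂² + x₃²)⁻¹`. -/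
def Wb (x : Fin 4 → ℝ) : ℝ :=
  2 * ((1 + x 3) ^ 2 + (x 0) ^ 2 + (x 1) ^ 2 + (x 2) ^ 2)⁻¹

/-- The upper half-ball `B⁴₊(0,R)`. -/
def hBall (R : ℝ) : Set (Fin 4 → ℝ) := {x | (∑ i, (x i) ^ 2) < R ^ 2 ∧ 0 < x 3}

/-!
`W = 2 / |x - p|²` with `p = -e₄`, so `|∇W|² = 16 / |x - p|⁶` and the integrand is
`16 x₄² / (|x|² + 2x₄ + 1)³`. For `|x| ≥ A` this lies between `(1 + 1/A)⁻⁶` times and `1` times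
the homogeneous density `16 x₄² / |x|⁶`, whose integral over the half-annulus `A ≤ |x| < R` is
computed exactly: by the reflection `x ↦ -x` and the symmetry between coordinates it is
`16 · ½ · ¼ · ∫_{A ≤ |x| < R} |x|⁻⁴ dx = 2 · |S³| · log (R / A) = 4π² log (R / A)`.
The part `|x| < A` contributes a bounded amount, so letting first `R → ∞` and then `A → ∞`
gives the limit.
-/

open Metric Module

theorem tendsto_inv_log_mul_of_bounds {f c : ℝ → ℝ} {C L : ℝ} (hc : Tendsto c atTop (𝓝 1))
    (hup : ∀ᶠ R in atTop, f R ≤ C + L * log R)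
    (hlow : ∀ᶠ A in atTop, ∀ᶠ R in atTop, c A * (L * (log R - log A)) ≤ f R) :
    Tendsto (fun R => (log R)⁻¹ * f R) atTop (𝓝 L) := by
  have hinv : Tendsto (fun R => (log R)⁻¹) atTop (𝓝 0) :=
    tendsto_inv_atTop_zero.comp tendsto_log_atTop
  have hlog : ∀ᶠ R in atTop, 0 < log R := tendsto_log_atTop.eventually_gt_atTop 0
  refine tendsto_order.2 ⟨fun a ha => ?_, fun b hb => ?_⟩
  · have hcL : Tendsto (fun A => c A * L) atTop (𝓝 L) := by simpa using hc.mul_const L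
    obtain ⟨A, hA, hcA⟩ := (hlow.and (hcL.eventually (lt_mem_nhds ha))).exists
    have hlim : Tendsto (fun R => c A * L - c A * L * log A * (log R)⁻¹) atTop
        (𝓝 (c A * L)) := by simpa using (hinv.const_mul (c A * L * log A)).const_sub (c A * L)
    filter_upwards [hlim.eventually (lt_mem_nhds hcA), hA, hlog] with R h₁ h₂ h₃
    calc a < c A * L - c A * L * log A * (log R)⁻¹ := h₁
      _ = (log R)⁻¹ * (c A * (L * (log R - log A))) := by field_simp
      _ ≤ (log R)⁻¹ * f R := by gcongr
  · have hlim : Tendsto (fun R => (log R)⁻¹ * C + L) atTop (𝓝 L) := by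
      simpa using (hinv.mul_const C).add_const L
    filter_upwards [hlim.eventually (gt_mem_nhds hb), hup, hlog] with R h₁ h₂ h₃
    calc (log R)⁻¹ * f R ≤ (log R)⁻¹ * (C + L * log R) := by gcongr
      _ = (log R)⁻¹ * C + L := by field_simp
      _ < b := h₁

theorem sum_sq_fderiv_const_mul_inv_sum_sq {ι : Type*} [Fintype ι] [DecidableEq ι] (c : ℝ)
    (p x : ι → ℝ) (hx : ∑ i, (x i - p i) ^ 2 ≠ 0) :
    ∑ a, fderiv ℝ (fun y => c * (∑ i, (y i - p i) ^ 2)⁻¹) x (Pi.single a 1) ^ 2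
      = 4 * c ^ 2 / (∑ i, (x i - p i) ^ 2) ^ 3 := by
  set q := ∑ i, (x i - p i) ^ 2
  set L : (ι → ℝ) →L[ℝ] ℝ := ∑ i, (2 * (x i - p i)) • ContinuousLinearMap.proj i
  have hq : HasFDerivAt (fun y : ι → ℝ => ∑ i, (y i - p i) ^ 2) L x :=
    HasFDerivAt.fun_sum fun i _ =>
      (((hasFDerivAt_apply (𝕜 := ℝ) (F' := fun _ : ι => ℝ) i x).sub_const (p i)).pow 2).congr_fderiv
        (by norm_num)
  have hW : HasFDerivAt (fun y => c * (∑ i, (y i - p i) ^ 2)⁻¹) (c • (-(q ^ 2)⁻¹) • L) x :=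
    ((hasDerivAt_inv hx).comp_hasFDerivAt x hq).const_mul c
  have hpartial : ∀ a, (c • (-(q ^ 2)⁻¹) • L) (Pi.single a 1) = -(2 * c / q ^ 2) * (x a - p a) := by
    intro a
    simp [L, Pi.single_apply]
    ring
  simp_rw [hW.fderiv, hpartial, mul_pow, ← Finset.mul_sum]
  field_simp
  ring

theorem integral_eq_two_mul_setIntegral_pos_of_even {E : Type*} [MeasurableSpace E]
    [AddGroup E] [MeasurableNeg E] {μ : Measure E} [μ.IsNegInvariant] {f φ : E → ℝ}
    (hf : Integrable f μ) (hφ : Measurable φ) (hf_even : ∀ x, f (-x) = f x)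
    (hφ_odd : ∀ x, φ (-x) = -φ x) (hf_zero : ∀ x, φ x = 0 → f x = 0) :
    ∫ x, f x ∂μ = 2 * ∫ x in {x | 0 < φ x}, f x ∂μ := by
  set S := {x | 0 < φ x}
  have hS : MeasurableSet S := measurableSet_lt measurable_const hφ
  have hsplit : ∀ x, f x = S.indicator f x + S.indicator f (-x) := by
    intro x
    rcases lt_trichotomy (φ x) 0 with h | h | h
    · have : -x ∈ S := by simp [S, hφ_odd, h]
      simp [indicator_of_mem this, indicator_of_notMem (show x ∉ S from h.not_gt), hf_even]
    · have : -x ∉ S := by simp [S, hφ_odd, h]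
      simp [indicator_of_notMem this, indicator_of_notMem (show x ∉ S from h.not_gt),
        hf_zero x h]
    · have : -x ∉ S := by simp [S, hφ_odd, h.le]
      simp [indicator_of_notMem this, indicator_of_mem (show x ∈ S from h)]
  have hint : Integrable (S.indicator f) μ := hf.indicator hS
  rw [integral_congr_ae (Eventually.of_forall hsplit), integral_add hint (hint.comp_neg),
    integral_neg_eq_self, integral_indicator hS, two_mul]

theorem integral_sq_apply_mul_radial_swap {ι : Type*} [Fintype ι] [DecidableEq ι] (g : ℝ → ℝ)
    (i j : ι) :
    ∫ x : EuclideanSpace ℝ ι, x i ^ 2 * g ‖x‖ = ∫ x : EuclideanSpace ℝ ι, x j ^ 2 * g ‖x‖ := by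
  let T := LinearIsometryEquiv.piLpCongrLeft 2 ℝ ℝ (Equiv.swap i j)
  have hT : ∀ x, T x j = x i := fun x => by
    simp [T, LinearIsometryEquiv.piLpCongrLeft_apply, Equiv.piCongrLeft'_apply]
  rw [← T.measurePreserving.integral_comp T.toHomeomorph.measurableEmbedding
    (fun x => x j ^ 2 * g ‖x‖)]
  simp only [hT, LinearIsometryEquiv.norm_map]

theorem card_mul_integral_sq_apply_mul_radial {ι : Type*} [Fintype ι] [DecidableEq ι]
    {g : ℝ → ℝ} (hg : ∀ i, Integrable fun x : EuclideanSpace ℝ ι => x i ^ 2 * g ‖x‖) (i : ι) :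
    Fintype.card ι * ∫ x : EuclideanSpace ℝ ι, x i ^ 2 * g ‖x‖
      = ∫ x : EuclideanSpace ℝ ι, ‖x‖ ^ 2 * g ‖x‖ := by
  simp_rw [EuclideanSpace.real_norm_sq_eq, Finset.sum_mul]
  rw [integral_finsetSum _ fun j _ => hg j, Finset.sum_congr rfl fun j _ =>
    integral_sq_apply_mul_radial_swap g j i]
  simp

theorem integral_indicator_Ico_inv_pow_finrank_norm {E : Type*} [NormedAddCommGroup E]
    [NormedSpace ℝ E] [MeasurableSpace E] [BorelSpace E] [FiniteDimensional ℝ E] [Nontrivial E]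
    (μ : Measure E) [μ.IsAddHaarMeasure] {A R : ℝ} (hA : 0 < A) (hAR : A ≤ R) :
    ∫ x, (Ico A R).indicator (fun r => (r ^ finrank ℝ E)⁻¹) ‖x‖ ∂μ
      = finrank ℝ E * μ.real (ball 0 1) * log (R / A) := by
  have hpos : 0 < finrank ℝ E := finrank_pos
  have hradial : ∫ r in Ioi (0 : ℝ), r ^ (finrank ℝ E - 1) •
      (Ico A R).indicator (fun r => (r ^ finrank ℝ E)⁻¹) r = ∫ r in A..R, r⁻¹ := by
    rw [intervalIntegral.integral_of_le hAR, ← integral_Ico_eq_integral_Ioc,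
      ← integral_indicator measurableSet_Ico, ← integral_indicator measurableSet_Ioi]
    congr 1 with r
    by_cases hr : r ∈ Ico A R
    · have hr0 : 0 < r := hA.trans_le hr.1
      simp only [indicator_of_mem hr, indicator_of_mem (show r ∈ Ioi 0 from hr0), smul_eq_mul]
      rw [← pow_sub_one_mul hpos.ne', mul_inv, ← mul_assoc, mul_inv_cancel₀ (by positivity),
        one_mul]
    · simp [indicator_of_notMem hr]
  rw [integral_fun_norm_addHaar, hradial, integral_inv_of_pos hA (hA.trans_le hAR)]
  simp only [nsmul_eq_mul, smul_eq_mul, mul_assoc]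

theorem integrableOn_ball_diff_ball {E : Type*} [NormedAddCommGroup E] [ProperSpace E]
    [MeasurableSpace E] [OpensMeasurableSpace E] {μ : Measure E} [IsLocallyFiniteMeasure μ]
    {f : E → ℝ} (hf : ContinuousOn f {0}ᶜ) {A : ℝ} (hA : 0 < A) (R : ℝ) :
    IntegrableOn f (ball 0 R \ ball 0 A) μ := by
  refine ((hf.mono fun y hy => ?_).integrableOn_compact
    ((isCompact_closedBall 0 R).diff isOpen_ball)).mono_set
    (sdiff_subset_sdiff_left ball_subset_closedBall)
  rintro rfl
  exact hy.2 (mem_ball_self hA)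

namespace YamabeBubble

local notation "ℝ⁴" => EuclideanSpace ℝ (Fin 4)

def energyDensity (y : ℝ⁴) : ℝ := 16 * y 3 ^ 2 / (‖y‖ ^ 2 + 2 * y 3 + 1) ^ 3

def modelDensity (y : ℝ⁴) : ℝ := 16 * y 3 ^ 2 / ‖y‖ ^ 6

def upperHalfSpace : Set ℝ⁴ := {y | 0 < y 3}

def halfAnnulus (A R : ℝ) : Set ℝ⁴ := upperHalfSpace ∩ (ball 0 R \ ball 0 A)

def halfBallEnergy (R : ℝ) : ℝ := ∫ y in upperHalfSpace ∩ ball 0 R, energyDensity y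

theorem measurableSet_upperHalfSpace : MeasurableSet upperHalfSpace :=
  (isOpen_lt continuous_const (by fun_prop)).measurableSet

theorem measurableSet_halfAnnulus (A R : ℝ) : MeasurableSet (halfAnnulus A R) :=
  measurableSet_upperHalfSpace.inter (measurableSet_ball.diff measurableSet_ball)

def centre : Fin 4 → ℝ := Pi.single 3 (-1)

theorem Wb_eq : Wb = fun y => 2 * (∑ i, (y i - centre i) ^ 2)⁻¹ := by
  ext y
  simp [Wb, centre, Fin.sum_univ_four]
  ring_nf

theorem sq_mul_sum_sq_fderiv_Wb {x : Fin 4 → ℝ} (hx : 0 ≤ x 3) :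
    x 3 ^ 2 * ∑ a, fderiv ℝ Wb x (Pi.single a 1) ^ 2 = energyDensity (WithLp.toLp 2 x) := by
  have hsum : ∑ i, (x i - centre i) ^ 2 = ‖WithLp.toLp 2 x‖ ^ 2 + 2 * x 3 + 1 := by
    simp [centre, EuclideanSpace.real_norm_sq_eq, Fin.sum_univ_four]
    ring
  rw [Wb_eq, sum_sq_fderiv_const_mul_inv_sum_sq _ _ _ (by rw [hsum]; positivity), hsum,
    energyDensity]
  ring

theorem setIntegral_hBall {R : ℝ} (hR : 0 ≤ R) :
    ∫ x in hBall R, x 3 ^ 2 * ∑ a, fderiv ℝ Wb x (Pi.single a 1) ^ 2 = halfBallEnergy R := by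
  have hpre : (MeasurableEquiv.toLp 2 (Fin 4 → ℝ)).symm ⁻¹' hBall R
      = upperHalfSpace ∩ ball (0 : ℝ⁴) R := by
    ext y
    simp [hBall, upperHalfSpace, ← EuclideanSpace.real_norm_sq_eq, and_comm,
      sq_lt_sq₀ (norm_nonneg y) hR]
  rw [← (EuclideanSpace.volume_preserving_symm_measurableEquiv_toLp
    (Fin 4)).setIntegral_preimage_emb (E := ℝ) (MeasurableEquiv.measurableEmbedding _)
    (fun x => x 3 ^ 2 * ∑ a, fderiv ℝ Wb x (Pi.single a 1) ^ 2), hpre]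
  exact setIntegral_congr_fun (measurableSet_upperHalfSpace.inter measurableSet_ball)
    fun y hy => sq_mul_sum_sq_fderiv_Wb (le_of_lt hy.1)

theorem energyDensity_le_modelDensity {y : ℝ⁴} (hy : 0 ≤ y 3) (hy0 : y ≠ 0) :
    energyDensity y ≤ modelDensity y := by
  unfold energyDensity modelDensity
  rw [show ‖y‖ ^ 6 = (‖y‖ ^ 2) ^ 3 by ring]
  gcongr
  linarith

theorem modelDensity_le_mul_energyDensity {A : ℝ} (hA : 0 < A) {y : ℝ⁴} (hy : 0 ≤ y 3)
    (hAy : A ≤ ‖y‖) : ((1 + A⁻¹) ^ 6)⁻¹ * modelDensity y ≤ energyDensity y := by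
  have hy3 : y 3 ≤ ‖y‖ := le_trans (le_abs_self _) (PiLp.norm_apply_le y 3)
  have hnorm : 0 < ‖y‖ := hA.trans_le hAy
  have hQ : ‖y‖ ^ 2 + 2 * y 3 + 1 ≤ ((1 + A⁻¹) * ‖y‖) ^ 2 := by
    have : 1 ≤ A⁻¹ * ‖y‖ := by rwa [le_inv_mul_iff₀ hA, mul_one]
    nlinarith
  unfold energyDensity modelDensity
  rw [← div_eq_inv_mul, div_div, show ‖y‖ ^ 6 * (1 + A⁻¹) ^ 6 = (((1 + A⁻¹) * ‖y‖) ^ 2) ^ 3 by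
    ring]
  gcongr

theorem volume_real_unitBall : (volume : Measure ℝ⁴).real (ball 0 1) = π ^ 2 / 2 := by
  rw [measureReal_def, InnerProductSpace.volume_ball_of_dim_even (k := 2) (by simp)]
  simp
  positivity

theorem setIntegral_modelDensity {A R : ℝ} (hA : 0 < A) (hAR : A ≤ R) :
    ∫ y in halfAnnulus A R, modelDensity y = 4 * π ^ 2 * (log R - log A) := by
  set g : ℝ → ℝ := (Ico A R).indicator fun r => (r ^ 6)⁻¹
  have hann : ∀ y : ℝ⁴, y ∈ ball 0 R \ ball 0 A ↔ ‖y‖ ∈ Ico A R := fun y => by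
    simp [and_comm]
  have hmeas : MeasurableSet (ball (0 : ℝ⁴) R \ ball 0 A) :=
    measurableSet_ball.diff measurableSet_ball
  have hcoord : ∀ (i : Fin 4) (y : ℝ⁴),
      (ball 0 R \ ball 0 A).indicator (fun y => y i ^ 2 / ‖y‖ ^ 6) y = y i ^ 2 * g ‖y‖ :=
    fun i y => by
      by_cases hy : ‖y‖ ∈ Ico A R
      · simp [g, indicator_of_mem hy, indicator_of_mem ((hann y).2 hy), div_eq_mul_inv]
      · simp [g, indicator_of_notMem hy, indicator_of_notMem (mt (hann y).1 hy)]
  have hradial : ∀ y : ℝ⁴,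
      ‖y‖ ^ 2 * g ‖y‖ = (Ico A R).indicator (fun r => (r ^ finrank ℝ ℝ⁴)⁻¹) ‖y‖ := fun y => by
    by_cases hy : ‖y‖ ∈ Ico A R
    · have : ‖y‖ ≠ 0 := (hA.trans_le hy.1).ne'
      simp [g, indicator_of_mem hy]
      field_simp
    · simp [g, indicator_of_notMem hy]
  have hint : ∀ i, Integrable fun y : ℝ⁴ => y i ^ 2 * g ‖y‖ := fun i => by
    simp_rw [← hcoord]
    refine (integrableOn_ball_diff_ball ?_ hA R).integrable_indicator hmeas
    exact ContinuousOn.div (by fun_prop) (by fun_prop) fun y hy =>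
      pow_ne_zero _ (norm_ne_zero_iff.2 hy)
  calc ∫ y in halfAnnulus A R, modelDensity y
      = ∫ y : ℝ⁴ in upperHalfSpace, 16 * (y 3 ^ 2 * g ‖y‖) := by
        simp_rw [halfAnnulus, ← setIntegral_indicator hmeas, ← hcoord, ← indicator_const_mul, ← mul_div_assoc]
        rfl
    _ = 2⁻¹ * ∫ y : ℝ⁴, 16 * (y 3 ^ 2 * g ‖y‖) := by
        rw [integral_eq_two_mul_setIntegral_pos_of_even ((hint 3).const_mul 16)
          (φ := fun y : ℝ⁴ => y 3) (by fun_prop)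
          (fun y => by simp) (fun y => by simp) (fun y hy => by simp [hy])]
        simp only [upperHalfSpace]
        ring
    _ = 2 * (Fintype.card (Fin 4) * ∫ y : ℝ⁴, y 3 ^ 2 * g ‖y‖) := by
        rw [integral_const_mul]; norm_num; ring
    _ = 2 * ∫ y : ℝ⁴, (Ico A R).indicator (fun r => (r ^ finrank ℝ ℝ⁴)⁻¹) ‖y‖ := by
        rw [card_mul_integral_sq_apply_mul_radial hint]; simp_rw [hradial]
    _ = 4 * π ^ 2 * (log R - log A) := by
        rw [integral_indicator_Ico_inv_pow_finrank_norm volume hA hAR, volume_real_unitBall,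
          finrank_euclideanSpace, log_div (hA.trans_le hAR).ne' hA.ne']
        norm_num; ring

theorem integrableOn_energyDensity (R : ℝ) :
    IntegrableOn energyDensity (upperHalfSpace ∩ ball 0 R) := by
  have hcont : ContinuousOn energyDensity {y | 0 ≤ y 3} :=
    ContinuousOn.div (by fun_prop) (by fun_prop) fun y (hy : 0 ≤ y 3) => by positivity
  refine (hcont.mono inter_subset_left).integrableOn_compact
    ((isCompact_closedBall 0 R).inter_left (isClosed_le continuous_const (by fun_prop)))
    |>.mono_set (inter_subset_inter (fun y (hy : 0 < y 3) => hy.le) ball_subset_closedBall)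

theorem integrableOn_modelDensity {A : ℝ} (hA : 0 < A) (R : ℝ) :
    IntegrableOn modelDensity (halfAnnulus A R) := by
  have hcont : ContinuousOn modelDensity {0}ᶜ :=
    ContinuousOn.div (by fun_prop) (by fun_prop) fun y hy =>
      pow_ne_zero _ (norm_ne_zero_iff.2 (mem_compl_singleton_iff.1 hy))
  exact (integrableOn_ball_diff_ball hcont hA R).mono_set inter_subset_right

theorem halfBallEnergy_eq_add {A R : ℝ} (hAR : A ≤ R) :
    halfBallEnergy R = halfBallEnergy A + ∫ y in halfAnnulus A R, energyDensity y := by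
  rw [halfBallEnergy, halfBallEnergy, halfAnnulus, ← setIntegral_union
    (Disjoint.mono inter_subset_right inter_subset_right disjoint_sdiff_right)
    (measurableSet_halfAnnulus A R) (integrableOn_energyDensity A) ((integrableOn_energyDensity R).mono_set
      (inter_subset_inter_right _ sdiff_subset)),
    ← inter_union_distrib_left, union_sdiff_cancel (ball_subset_ball hAR)]

theorem halfBallEnergy_le {R : ℝ} (hR : 1 ≤ R) :
    halfBallEnergy R ≤ halfBallEnergy 1 + 4 * π ^ 2 * log R := by
  rw [halfBallEnergy_eq_add hR, ← sub_zero (log R), ← log_one,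
    ← setIntegral_modelDensity one_pos hR]
  refine add_le_add_right (setIntegral_mono_on ((integrableOn_energyDensity R).mono_set
      (inter_subset_inter_right _ sdiff_subset)) (integrableOn_modelDensity one_pos R)
    (measurableSet_halfAnnulus _ R) fun y hy => energyDensity_le_modelDensity (hy.1 : 0 < y 3).le ?_) _
  rintro rfl
  exact hy.2.2 (mem_ball_self one_pos)

theorem le_halfBallEnergy {A R : ℝ} (hA : 0 < A) (hAR : A ≤ R) :
    ((1 + A⁻¹) ^ 6)⁻¹ * (4 * π ^ 2 * (log R - log A)) ≤ halfBallEnergy R := by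
  rw [halfBallEnergy_eq_add hAR, ← setIntegral_modelDensity hA hAR,
    ← integral_const_mul]
  have hnonneg : 0 ≤ halfBallEnergy A :=
    setIntegral_nonneg (measurableSet_upperHalfSpace.inter measurableSet_ball)
      fun y (hy : 0 < y 3 ∧ _) => by unfold energyDensity; have := hy.1.le; positivity
  refine le_add_of_nonneg_of_le hnonneg (setIntegral_mono_on
    ((integrableOn_modelDensity hA R).const_mul _) ((integrableOn_energyDensity R).mono_set
      (inter_subset_inter_right _ sdiff_subset))
    (measurableSet_halfAnnulus _ R) fun y hy => modelDensity_le_mul_energyDensity hA (hy.1 : 0 < y 3).le ?_)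
  simpa using hy.2.2

end YamabeBubble

/-- `lim_{R→∞} (log R)⁻¹ ∫_{B⁴₊(0,R)} x₄² |∇W|² dx = 4π²`: the weighted energy of the
bubble diverges logarithmically with rate `4π²`. -/
theorem statement16 :
    Tendsto (fun R : ℝ =>
        (Real.log R)⁻¹ * ∫ x in hBall R,
          (x 3) ^ 2 * ∑ a : Fin 4, (fderiv ℝ Wb x (Pi.single a 1)) ^ 2)
      atTop (nhds (4 * Real.pi ^ 2)) := by
  have hc : Tendsto (fun A : ℝ => ((1 + A⁻¹) ^ 6)⁻¹) atTop (𝓝 1) := by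
    simpa using ((tendsto_inv_atTop_zero (𝕜 := ℝ)).const_add 1 |>.pow 6).inv₀ (by norm_num)
  have hup : ∀ᶠ R in atTop, YamabeBubble.halfBallEnergy R
      ≤ YamabeBubble.halfBallEnergy 1 + 4 * π ^ 2 * log R :=
    (eventually_ge_atTop 1).mono fun R => YamabeBubble.halfBallEnergy_le
  have hlow : ∀ᶠ A in atTop, ∀ᶠ R in atTop,
      ((1 + A⁻¹) ^ 6)⁻¹ * (4 * π ^ 2 * (log R - log A)) ≤ YamabeBubble.halfBallEnergy R :=
    (eventually_gt_atTop 0).mono fun A hA =>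
      (eventually_ge_atTop A).mono fun R => YamabeBubble.le_halfBallEnergy hA
  refine (tendsto_inv_log_mul_of_bounds hc hup hlow).congr' ?_
  filter_upwards [eventually_ge_atTop 0] with R hR
  rw [YamabeBubble.setIntegral_hBall hR]
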